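/- arXiv:1907.07258 — 3 statements merged into one kernel-verified Lean document; each statement's English description precedes it below -/
import Mathlib

section
/- Let ‖·‖ be a norm on ℝⁿ with unit ball 𝓑 = {x ∈ ℝⁿ : ‖x‖ ≤ 1}, and let X be a symmetric random vector in ℝⁿ satisfying the small-ball condition with respect to ‖·‖ with constants γ, δ > 0. Then for every p > log(2/δ), γ · conv(K_p(X) ∪ (−K_p(X))) ⊆ 𝓑. -/
open MeasureTheory ProbabilityTheory Real Set
open scoped BigOperators ENNReal Pointwise

noncomputable section

/-- The dot product of two vectors in `ℝⁿ`. -/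
def dotp {n : ℕ} (x t : Fin n → ℝ) : ℝ := ∑ i, x i * t i

/-- The floating body `K_p(X)` of a random vector `X` defined on `(Ω, μ)`. -/
def floatingBody {Ω : Type*} [MeasurableSpace Ω] {n : ℕ}
    (μ : Measure Ω) (X : Ω → Fin n → ℝ) (p : ℝ) : Set (Fin n → ℝ) :=
  {t | μ {ω | 1 ≤ dotp (X ω) t} ≤ ENNReal.ofReal (Real.exp (-p))}

/-- The polar `T°` of a set `T ⊆ ℝⁿ`. -/
def polarSet {n : ℕ} (T : Set (Fin n → ℝ)) : Set (Fin n → ℝ) :=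
  {x | ∀ t ∈ T, dotp t x ≤ 1}

/-- `nrm` is a norm on `ℝⁿ`. -/
def IsNormOn {n : ℕ} (nrm : (Fin n → ℝ) → ℝ) : Prop :=
  (∀ x, 0 ≤ nrm x) ∧ (∀ x, nrm x = 0 ↔ x = 0) ∧
  (∀ (c : ℝ) (x), nrm (c • x) = |c| * nrm x) ∧
  (∀ x y, nrm (x + y) ≤ nrm x + nrm y)

/-- `X` is a symmetric random vector: `X` and `-X` have the same law. -/
def IsSymmetricRV {Ω : Type*} [MeasurableSpace Ω] {n : ℕ}
    (μ : Measure Ω) (X : Ω → Fin n → ℝ) : Prop :=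
  Measure.map X μ = Measure.map (fun ω => -(X ω)) μ

/-- The small-ball condition with respect to the norm `nrm`, with constants `γ, δ`. -/
def SmallBall {Ω : Type*} [MeasurableSpace Ω] {n : ℕ}
    (μ : Measure Ω) (X : Ω → Fin n → ℝ) (nrm : (Fin n → ℝ) → ℝ) (γ δ : ℝ) : Prop :=
  ∀ t, ENNReal.ofReal δ ≤ μ {ω | γ * nrm t ≤ |dotp (X ω) t|}

/-- The `L_r` condition with respect to the norm `nrm`, with constant `L`. -/
def LrCond {Ω : Type*} [MeasurableSpace Ω] {n : ℕ}
    (μ : Measure Ω) (X : Ω → Fin n → ℝ) (nrm : (Fin n → ℝ) → ℝ) (r L : ℝ) : Prop :=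
  ∀ t, Integrable (fun ω => |dotp (X ω) t| ^ r) μ ∧
    (∫ ω, |dotp (X ω) t| ^ r ∂μ) ^ (1 / r) ≤ L * nrm t

/-- `Y 1, …, Y N` are independent copies of `X`. -/
def IIDCopies {Ω : Type*} [MeasurableSpace Ω] {n N : ℕ}
    (μ : Measure Ω) (X : Ω → Fin n → ℝ) (Y : Fin N → Ω → Fin n → ℝ) : Prop :=
  (∀ i, Measurable (Y i)) ∧
  iIndepFun Y μ ∧
  (∀ i, Measure.map (Y i) μ = Measure.map X μ)

/-- The absolute convex hull of the points `Y 1, …, Y N`, i.e. the convex hull of `{±Y i}`. -/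
def absconv {n N : ℕ} (Y : Fin N → Fin n → ℝ) : Set (Fin n → ℝ) :=
  convexHull ℝ ((Set.range Y) ∪ (Set.range fun i => -(Y i)))

/-- Proposition 2.6(2): if a symmetric `X` satisfies the small-ball condition
with constants `γ, δ`, then for `p > log(2/δ)`,
`γ · conv(K_p(X) ∪ (−K_p(X)))` is contained in the unit ball of the norm. -/
theorem stmt4 {Ω : Type*} [MeasurableSpace Ω] {n : ℕ}
    (μ : Measure Ω) [IsProbabilityMeasure μ] (X : Ω → Fin n → ℝ)
    (nrm : (Fin n → ℝ) → ℝ) (γ δ : ℝ) (hγ : 0 < γ) (hδ : 0 < δ)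
    (hnrm : IsNormOn nrm) (hX : Measurable X) (hsym : IsSymmetricRV μ X)
    (hsb : SmallBall μ X nrm γ δ)
    (p : ℝ) (hp : Real.log (2 / δ) < p) :
    γ • convexHull ℝ (floatingBody μ X p ∪ -(floatingBody μ X p)) ⊆
      {x | nrm x ≤ 1} := by
  obtain ⟨hn0, hn1, hn2, hn3⟩ := hnrm
  have hneg : ∀ x, nrm (-x) = nrm x := by
    intro x
    have := hn2 (-1) x
    simpa using this
  -- key claim : t ∈ K_p → γ * nrm t ≤ 1
  have key : ∀ t ∈ floatingBody μ X p, γ * nrm t ≤ 1 := by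
    intro t ht
    by_contra hcon
    push_neg at hcon
    have hmeas : Measurable fun x : Fin n → ℝ => dotp x t := by
      unfold dotp
      exact Finset.measurable_sum _ fun i _ => (measurable_pi_apply i).mul_const _
    have hmX : Measurable fun ω => dotp (X ω) t := hmeas.comp hX
    have hdotneg : ∀ x : Fin n → ℝ, dotp (-x) t = -(dotp x t) := by
      intro x
      unfold dotp
      simp [neg_mul, Finset.sum_neg_distrib]
    -- the small-ball set is contained in two tail sets
    have hsubset : {ω | γ * nrm t ≤ |dotp (X ω) t|} ⊆
        {ω | 1 ≤ dotp (X ω) t} ∪ {ω | dotp (X ω) t ≤ -1} := by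
      intro ω hω
      simp only [Set.mem_setOf_eq] at hω
      rcases le_abs.mp hω with h | h
      · exact Or.inl (le_trans hcon.le h)
      · exact Or.inr (show dotp (X ω) t ≤ -1 by linarith)
    -- symmetry gives equality of the two tail measures
    have hmapeq : μ {ω | dotp (X ω) t ≤ -1} = μ {ω | 1 ≤ dotp (X ω) t} := by
      have hs1 : MeasurableSet {x : Fin n → ℝ | dotp x t ≤ -1} :=
        measurableSet_le hmeas measurable_const
      have e1 : μ {ω | dotp (X ω) t ≤ -1} = (Measure.map X μ) {x | dotp x t ≤ -1} := by
        rw [Measure.map_apply hX hs1]; rfl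
      have e2 : (Measure.map (fun ω => -(X ω)) μ) {x | dotp x t ≤ -1}
          = μ {ω | 1 ≤ dotp (X ω) t} := by
        rw [Measure.map_apply (show Measurable (fun ω => -(X ω)) from hX.neg) hs1]
        congr 1
        ext ω
        simp only [Set.mem_preimage, Set.mem_setOf_eq, hdotneg]
        constructor <;> intro h <;> linarith
      rw [e1, hsym, e2]
    -- derive contradiction
    have hle : ENNReal.ofReal δ ≤ 2 * μ {ω | 1 ≤ dotp (X ω) t} := by
      calc ENNReal.ofReal δ ≤ μ {ω | γ * nrm t ≤ |dotp (X ω) t|} := hsb t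
        _ ≤ μ ({ω | 1 ≤ dotp (X ω) t} ∪ {ω | dotp (X ω) t ≤ -1}) := measure_mono hsubset
        _ ≤ μ {ω | 1 ≤ dotp (X ω) t} + μ {ω | dotp (X ω) t ≤ -1} := measure_union_le _ _
        _ = 2 * μ {ω | 1 ≤ dotp (X ω) t} := by rw [hmapeq]; ring
    have hle2 : ENNReal.ofReal δ ≤ ENNReal.ofReal (2 * Real.exp (-p)) := by
      calc ENNReal.ofReal δ ≤ 2 * μ {ω | 1 ≤ dotp (X ω) t} := hle
        _ ≤ 2 * ENNReal.ofReal (Real.exp (-p)) := by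
            exact mul_le_mul_right ht _
        _ = ENNReal.ofReal (2 * Real.exp (-p)) := by
            rw [ENNReal.ofReal_mul (by norm_num)]
            norm_num
    have hreal : δ ≤ 2 * Real.exp (-p) :=
      (ENNReal.ofReal_le_ofReal_iff (by positivity)).mp hle2
    -- but exp(-p) < δ/2
    have h2δ : (0:ℝ) < 2 / δ := by positivity
    have hexp : 2 / δ < Real.exp p := by
      have := Real.exp_lt_exp.mpr hp
      rwa [Real.exp_log h2δ] at this
    have hep : Real.exp (-p) < δ / 2 := by
      have h1 : Real.exp (-p) * Real.exp p = 1 := by rw [← Real.exp_add]; simp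
      have h2 : (1:ℝ) < δ / 2 * Real.exp p := by
        have h3 : δ / 2 * (2 / δ) = 1 := by field_simp
        nlinarith [Real.exp_pos p]
      by_contra hge
      push_neg at hge
      have h4 : δ / 2 * Real.exp p ≤ Real.exp (-p) * Real.exp p :=
        mul_le_mul_of_nonneg_right hge (Real.exp_pos p).le
      linarith
    linarith
  -- the set S = {x | γ * nrm x ≤ 1} is convex and contains K_p ∪ -K_p
  set S : Set (Fin n → ℝ) := {x | γ * nrm x ≤ 1} with hS
  have hconv : Convex ℝ S := by
    intro x hx y hy a b ha hb hab
    simp only [hS, Set.mem_setOf_eq] at hx hy ⊢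
    have h1 : nrm (a • x + b • y) ≤ a * nrm x + b * nrm y := by
      calc nrm (a • x + b • y) ≤ nrm (a • x) + nrm (b • y) := hn3 _ _
        _ = a * nrm x + b * nrm y := by
            rw [hn2, hn2, abs_of_nonneg ha, abs_of_nonneg hb]
    nlinarith [hn0 x, hn0 y]
  have hsub2 : convexHull ℝ (floatingBody μ X p ∪ -(floatingBody μ X p)) ⊆ S := by
    apply convexHull_min _ hconv
    rintro x (hx | hx)
    · exact key x hx
    · have hx' : -x ∈ floatingBody μ X p := Set.mem_neg.mp hx
      have := key (-x) hx'
      simpa [hneg, hS] using this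
  rintro _ ⟨x, hx, rfl⟩
  have := hsub2 hx
  simp only [hS, Set.mem_setOf_eq] at this
  show nrm (γ • x) ≤ 1
  rw [hn2, abs_of_pos hγ]
  exact this
end
end

section
/- Let ‖·‖ be a norm on ℝⁿ with unit sphere 𝓢 = {x : ‖x‖ = 1}, and let X be a symmetric random vector in ℝⁿ satisfying the small-ball condition with constants γ, δ > 0 and the L_r condition with constant L > 0 (for some r > 0), both with respect to ‖·‖. Let p > log(2/δ), and for θ ∈ 𝓢 define r(θ) := sup{β ≥ 0 : βθ ∈ K_p(X)} (which is finite and positive under these assumptions). Then for every θ ∈ 𝓢, P(⟨X, r(θ)·θ⟩ ≥ 1) ≥ exp(−p). -/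
open MeasureTheory ProbabilityTheory Real Set
open scoped BigOperators ENNReal Pointwise

noncomputable section

section Aux

variable {Ω : Type*} [MeasurableSpace Ω] {n : ℕ}

lemma dotp_smul_right (x t : Fin n → ℝ) (c : ℝ) : dotp x (c • t) = c * dotp x t := by
  simp only [dotp, Pi.smul_apply, smul_eq_mul, Finset.mul_sum]; exact Finset.sum_congr rfl fun i _ => by ring

lemma dotp_neg_left (x t : Fin n → ℝ) : dotp (-x) t = -(dotp x t) := by
  simp [dotp, ← Finset.sum_neg_distrib]

lemma measurable_dotp {X : Ω → Fin n → ℝ} (hX : Measurable X) (t : Fin n → ℝ) :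
    Measurable fun ω => dotp (X ω) t := by
  unfold dotp
  exact Finset.measurable_sum _ fun i _ => ((hX.eval (a := i)).mul measurable_const)

end Aux

/-- Corollary `cor:boundary-points`: under the small-ball and `L_r` conditions
and for `p > log(2/δ)`, for every `θ` on the unit sphere of the norm, the "radial boundary point"
`r(θ)·θ` of `K_p(X)` satisfies `P(⟨X, r(θ)θ⟩ ≥ 1) ≥ exp(-p)`. -/
theorem stmt6 {Ω : Type*} [MeasurableSpace Ω] {n : ℕ}
    (μ : Measure Ω) [IsProbabilityMeasure μ] (X : Ω → Fin n → ℝ)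
    (nrm : (Fin n → ℝ) → ℝ) (γ δ r L : ℝ) (hγ : 0 < γ) (hδ : 0 < δ)
    (hr : 0 < r) (hL : 0 < L)
    (hnrm : IsNormOn nrm) (hX : Measurable X) (hsym : IsSymmetricRV μ X)
    (hsb : SmallBall μ X nrm γ δ) (hLr : LrCond μ X nrm r L)
    (p : ℝ) (hp : Real.log (2 / δ) < p)
    (θ : Fin n → ℝ) (hθ : nrm θ = 1) :
    ENNReal.ofReal (Real.exp (-p)) ≤
      μ {ω | 1 ≤ dotp (X ω)
        ((sSup {β : ℝ | 0 ≤ β ∧ β • θ ∈ floatingBody μ X p}) • θ)} := by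
  obtain ⟨hInt, hLrθ⟩ := hLr θ
  set g : Ω → ℝ := fun ω => dotp (X ω) θ with hg
  have hgm : Measurable g := measurable_dotp hX θ
  set S : Set ℝ := {β : ℝ | 0 ≤ β ∧ β • θ ∈ floatingBody μ X p} with hSdef
  have hsets : ∀ c : ℝ, {ω | 1 ≤ dotp (X ω) (c • θ)} = {ω | 1 ≤ c * g ω} := by
    intro c; ext ω; simp [dotp_smul_right, hg]
  have hδ2 : (0:ℝ) < δ/2 := by linarith
  have hexp : Real.exp (-p) < δ/2 := by
    have h2 : Real.log (2/δ) = - Real.log (δ/2) := by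
      rw [← Real.log_inv]; congr 1; field_simp
    have h3 : -p < Real.log (δ/2) := by linarith
    calc Real.exp (-p) < Real.exp (Real.log (δ/2)) := Real.exp_lt_exp.2 h3
      _ = δ/2 := Real.exp_log hδ2
  -- symmetry
  have hsymm : μ {ω | γ ≤ g ω} = μ {ω | g ω ≤ -γ} := by
    have hmd : Measurable fun x : Fin n → ℝ => dotp x θ := measurable_dotp measurable_id θ
    have hB : MeasurableSet {x : Fin n → ℝ | γ ≤ dotp x θ} := hmd measurableSet_Ici
    have h1 : μ {ω | γ ≤ g ω} = (Measure.map X μ) {x | γ ≤ dotp x θ} := by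
      rw [Measure.map_apply hX hB]; rfl
    have h2 : (Measure.map (fun ω => -(X ω)) μ) {x | γ ≤ dotp x θ} = μ {ω | g ω ≤ -γ} := by
      rw [Measure.map_apply (f := fun ω => -(X ω)) hX.neg hB]
      congr 1; ext ω
      simp only [Set.mem_preimage, Set.mem_setOf_eq, dotp_neg_left, hg]
      constructor <;> intro h <;> linarith
    rw [h1, hsym, h2]
  have hA : ENNReal.ofReal (δ/2) ≤ μ {ω | γ ≤ g ω} := by
    have hsub : {ω | γ * nrm θ ≤ |dotp (X ω) θ|} ⊆ {ω | γ ≤ g ω} ∪ {ω | g ω ≤ -γ} := by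
      intro ω hω
      simp only [hθ, mul_one, Set.mem_setOf_eq] at hω
      rcases le_abs.mp hω with h | h
      · exact Or.inl h
      · exact Or.inr (by simp only [Set.mem_setOf_eq]; linarith)
    have h2 : ENNReal.ofReal δ ≤ μ {ω | γ ≤ g ω} + μ {ω | g ω ≤ -γ} :=
      le_trans (hsb θ) (le_trans (measure_mono hsub) (measure_union_le _ _))
    rw [← hsymm, ← two_mul] at h2
    calc ENNReal.ofReal (δ/2) = ENNReal.ofReal δ / 2 := by
          rw [ENNReal.ofReal_div_of_pos two_pos]; norm_num
      _ ≤ μ {ω | γ ≤ g ω} := ENNReal.div_le_of_le_mul (by rwa [mul_comm] at h2)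
  -- upper bound for S
  have hub : ∀ β ∈ S, β ≤ 1/γ := by
    rintro β ⟨hβ0, hβK⟩
    by_contra hcon
    push_neg at hcon
    have hβpos : 0 < β := lt_trans (by positivity) hcon
    have hsub2 : {ω | γ ≤ g ω} ⊆ {ω | 1 ≤ β * g ω} := by
      intro ω hω
      simp only [Set.mem_setOf_eq] at *
      have h1 : 1/γ * γ ≤ β * g ω :=
        mul_le_mul hcon.le hω hγ.le hβpos.le
      rwa [one_div, inv_mul_cancel₀ (ne_of_gt hγ)] at h1
    have hK : μ {ω | 1 ≤ β * g ω} ≤ ENNReal.ofReal (Real.exp (-p)) := by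
      have h := hβK
      rw [floatingBody, Set.mem_setOf_eq, hsets β] at h
      exact h
    have hfin : ENNReal.ofReal (δ/2) ≤ ENNReal.ofReal (Real.exp (-p)) :=
      le_trans (le_trans hA (measure_mono hsub2)) hK
    have := (ENNReal.ofReal_le_ofReal_iff (Real.exp_pos _).le).mp hfin
    linarith
  -- Markov: a small positive element of S
  set M := ∫ ω, |dotp (X ω) θ| ^ r ∂μ with hMdef
  have hM0 : 0 ≤ M := integral_nonneg fun ω => Real.rpow_nonneg (abs_nonneg _) r
  have hMle : M ≤ L ^ r := by
    have h1 : (M ^ (1/r)) ^ r ≤ L ^ r :=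
      Real.rpow_le_rpow (Real.rpow_nonneg hM0 _) (by simpa [hθ] using hLrθ) hr.le
    rwa [← Real.rpow_mul hM0, one_div, inv_mul_cancel₀ hr.ne', Real.rpow_one] at h1
  set β0 : ℝ := Real.exp (-p/r) / L with hβ0def
  have hβ0pos : 0 < β0 := div_pos (Real.exp_pos _) hL
  have hb0r : β0 ^ r = Real.exp (-p) / L ^ r := by
    rw [hβ0def, Real.div_rpow (Real.exp_pos _).le hL.le, ← Real.exp_mul]
    congr 2
    field_simp
  have hβ0S : β0 ∈ S := by
    refine ⟨hβ0pos.le, ?_⟩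
    rw [floatingBody, Set.mem_setOf_eq, hsets β0]
    have hpow_pos : (0:ℝ) < (1/β0)^r := Real.rpow_pos_of_pos (by positivity) r
    have hsub : {ω | 1 ≤ β0 * g ω} ⊆ {ω | (1/β0)^r ≤ |g ω|^r} := by
      intro ω hω
      simp only [Set.mem_setOf_eq] at *
      have h1 : 1/β0 ≤ g ω := by
        rw [div_le_iff₀ hβ0pos]; linarith
      exact Real.rpow_le_rpow (by positivity) (le_trans h1 (le_abs_self _)) hr.le
    have hmark := mul_meas_ge_le_integral_of_nonneg
      (ae_of_all μ fun ω => Real.rpow_nonneg (abs_nonneg (dotp (X ω) θ)) r) hInt ((1/β0)^r)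
    have hmeas_le : μ {ω | (1/β0)^r ≤ |g ω|^r} ≤ ENNReal.ofReal (M / (1/β0)^r) := by
      have hfin : μ {ω | (1/β0)^r ≤ |g ω|^r} ≠ ⊤ := measure_ne_top μ _
      rw [← ENNReal.ofReal_toReal hfin]
      apply ENNReal.ofReal_le_ofReal
      rw [le_div_iff₀ hpow_pos]
      exact le_trans (le_of_eq (mul_comm _ _)) hmark
    have hval : M / (1/β0)^r ≤ Real.exp (-p) := by
      have hLr_pos : (0:ℝ) < L ^ r := Real.rpow_pos_of_pos hL r
      rw [one_div, Real.inv_rpow hβ0pos.le, div_inv_eq_mul, hb0r]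
      calc M * (Real.exp (-p) / L ^ r) ≤ L ^ r * (Real.exp (-p) / L ^ r) :=
            mul_le_mul_of_nonneg_right hMle (by positivity)
        _ = Real.exp (-p) := by field_simp
    exact le_trans (le_trans (measure_mono hsub) hmeas_le) (ENNReal.ofReal_le_ofReal hval)
  have hbdd : BddAbove S := ⟨1/γ, hub⟩
  set R := sSup S with hRdef
  have hRpos : 0 < R := lt_of_lt_of_le hβ0pos (le_csSup hbdd hβ0S)
  have hgt : ∀ β, R < β → ENNReal.ofReal (Real.exp (-p)) < μ {ω | 1 ≤ β * g ω} := by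
    intro β hβ
    have hβS : β ∉ S := fun h => absurd (le_csSup hbdd h) (not_le.2 hβ)
    have hβ0' : 0 ≤ β := le_trans hRpos.le hβ.le
    have hnm : ¬ (β • θ ∈ floatingBody μ X p) := fun h => hβS ⟨hβ0', h⟩
    rw [floatingBody, Set.mem_setOf_eq, hsets β] at hnm
    exact not_le.mp hnm
  set s : ℕ → Set Ω := fun k => {ω | 1 ≤ (R + 1/((k:ℝ)+1)) * g ω} with hsdef
  have hmono : ∀ a b : ℝ, 0 < a → a ≤ b →
      {ω | 1 ≤ a * g ω} ⊆ {ω | 1 ≤ b * g ω} := by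
    intro a b ha hab ω hω
    simp only [Set.mem_setOf_eq] at *
    nlinarith
  have hanti : Antitone s := by
    intro k m hkm
    apply hmono
    · positivity
    · have hc : ((k:ℝ)+1) ≤ ((m:ℝ)+1) := by
        have : (k:ℝ) ≤ (m:ℝ) := Nat.cast_le.mpr hkm
        linarith
      have := one_div_le_one_div_of_le (by positivity : (0:ℝ) < (k:ℝ)+1) hc
      linarith
  have hsm : ∀ k, MeasurableSet (s k) := fun k =>
    measurableSet_le measurable_const (measurable_const.mul hgm)
  have hint : ⋂ k, s k = {ω | 1 ≤ R * g ω} := by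
    ext ω
    simp only [Set.mem_iInter, hsdef, Set.mem_setOf_eq]
    constructor
    · intro h
      by_contra hc
      push_neg at hc
      have hg0 : 0 < g ω := by
        have h0 := h 0
        push_cast at h0
        nlinarith
      obtain ⟨k, hk⟩ := exists_nat_gt (g ω / (1 - R * g ω))
      have hk1 : g ω / (1 - R * g ω) < (k:ℝ) + 1 := by linarith
      rw [div_lt_iff₀ (by linarith)] at hk1
      have hkk := h k
      have h1k : 1/((k:ℝ)+1) * g ω < 1 - R * g ω := by
        have he : (1:ℝ)/((k:ℝ)+1) * g ω = g ω / ((k:ℝ)+1) := by ring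
        rw [he, div_lt_iff₀ (by positivity : (0:ℝ) < (k:ℝ)+1)]
        nlinarith
      nlinarith
    · intro h k
      have hg0 : 0 < g ω := by nlinarith
      have h1 : (0:ℝ) < 1/((k:ℝ)+1) := by positivity
      nlinarith
  have hfinal : μ {ω | 1 ≤ R * g ω} = ⨅ k, μ (s k) := by
    rw [← hint]
    exact Directed.measure_iInter (fun k => (hsm k).nullMeasurableSet)
      hanti.directed_ge ⟨0, measure_ne_top μ _⟩
  rw [hsets R, hfinal]
  refine le_iInf fun k => ?_
  exact (hgt _ (lt_add_of_pos_right R (by positivity))).le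
end
end

section
/- Let 𝓓 be a family of subsets of a set Ω such that the class of indicator functions 𝓕 = {𝟙_D : D ∈ 𝓓} has VC dimension d ≥ 1. Then the class 𝓕̃ = {𝟙_{D ∪ D'} : D, D' ∈ 𝓓} of indicators of unions of two members of 𝓓 satisfies VC(𝓕̃) < 10·d. -/
open MeasureTheory ProbabilityTheory Real Set
open scoped BigOperators ENNReal

noncomputable section

/-- A class `F` of real-valued functions shatters a finite set `S` if every subset `T ⊆ S`
can be picked out: some `f ∈ F` equals `1` exactly on `T` (within `S`). -/
def ShattersF {E : Type*} (F : Set (E → ℝ)) (S : Finset E) : Prop :=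
  ∀ T ⊆ S, ∃ f ∈ F, ∀ x ∈ S, (f x = 1 ↔ x ∈ T)

/-- The VC dimension of a class of functions: the supremum (in `ℕ∞`) of the cardinalities of
finite shattered sets. -/
def vcDim {E : Type*} (F : Set (E → ℝ)) : ℕ∞ :=
  ⨆ (S : Finset E) (_ : ShattersF F S), (S.card : ℕ∞)

/-!
If the unions shatter a set `S` with `#S = n`, every subset of `S` is the union of two traces on
`S` of members of `𝓓`, so `2 ^ n ≤ Φ ^ 2` where `Φ` is the number of such traces; by
Sauer–Shelah, `Φ ≤ ∑_{i ≤ d} C(n, i)`. For `n = 10 d`, comparing this sum termwise with the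
binomial expansion of `(11 d) ^ (10 d)` gives `Φ ≤ (11 ^ 10 / 10 ^ 9) ^ d`, and
`11 ^ 20 < 2 ^ 10 * 10 ^ 18` then forces `Φ ^ 2 < 2 ^ (10 d)`. Shattering passes to subsets, so no
set of size `≥ 10 d` is shattered.
-/

open Finset

section Trace

variable {E : Type*}

open Classical in
def traceF (F : Set (E → ℝ)) (S : Finset E) : Finset (Finset E) :=
  S.powerset.filter fun T => ∃ f ∈ F, ∀ x ∈ S, (f x = 1 ↔ x ∈ T)

lemma mem_traceF {F : Set (E → ℝ)} {S T : Finset E} :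
    T ∈ traceF F S ↔ T ⊆ S ∧ ∃ f ∈ F, ∀ x ∈ S, (f x = 1 ↔ x ∈ T) := by
  simp [traceF]

lemma ShattersF.mono {F : Set (E → ℝ)} {S T : Finset E} (hS : ShattersF F S) (hTS : T ⊆ S) :
    ShattersF F T := by
  intro U hUT
  obtain ⟨f, hf, hfS⟩ := hS U (hUT.trans hTS)
  exact ⟨f, hf, fun x hx => hfS x (hTS hx)⟩

lemma card_le_vcDim {F : Set (E → ℝ)} {S : Finset E} (hS : ShattersF F S) :
    (#S : ℕ∞) ≤ vcDim F :=
  le_iSup₂ (f := fun (S : Finset E) (_ : ShattersF F S) => (#S : ℕ∞)) S hS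

lemma vcDim_le {F : Set (E → ℝ)} {n : ℕ} (h : ∀ S, ShattersF F S → #S ≤ n) :
    vcDim F ≤ n :=
  iSup₂_le fun S hS => by exact_mod_cast h S hS

lemma shattersF_of_shatters_traceF [DecidableEq E] {F : Set (E → ℝ)} {S t : Finset E}
    (ht : (traceF F S).Shatters t) : ShattersF F t := by
  intro T hTt
  obtain ⟨u, hu, rfl⟩ := ht hTt
  obtain ⟨-, f, hf, hfu⟩ := mem_traceF.1 hu
  obtain ⟨v, hv, htv⟩ := ht.exists_superset
  have htS : t ⊆ S := htv.trans (mem_traceF.1 hv).1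
  exact ⟨f, hf, fun x hx => by rw [hfu x (htS hx), Finset.mem_inter, and_iff_right hx]⟩

lemma card_traceF_le {F : Set (E → ℝ)} {d : ℕ} (hF : ∀ t, ShattersF F t → #t ≤ d)
    (S : Finset E) : #(traceF F S) ≤ ∑ i ∈ range (d + 1), (#S).choose i := by
  classical
  calc #(traceF F S) ≤ #(traceF F S).shatterer := card_le_card_shatterer _
    _ ≤ #((range (d + 1)).biUnion fun i => S.powersetCard i) := by
      refine card_le_card fun t ht => mem_biUnion.2 ⟨#t, ?_, ?_⟩
      · exact mem_range.2 (Nat.lt_succ_of_le (hF t (shattersF_of_shatters_traceF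
          (mem_shatterer.1 ht))))
      · obtain ⟨u, hu, htu⟩ := (mem_shatterer.1 ht).exists_superset
        exact mem_powersetCard.2 ⟨htu.trans (mem_traceF.1 hu).1, rfl⟩
    _ ≤ ∑ i ∈ range (d + 1), (#S).choose i := by
      exact card_biUnion_le.trans_eq (sum_congr rfl fun i _ => card_powersetCard i S)

end Trace

section Unions

variable {Ω : Type*}

lemma indicator_one_eq_one_iff (A : Set Ω) (x : Ω) :
    A.indicator (fun _ => (1 : ℝ)) x = 1 ↔ x ∈ A :=
  Set.indicator_eq_one_iff_mem ℝ

lemma two_pow_card_le_sq_card_traceF {𝓓 : Set (Set Ω)} {S : Finset Ω}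
    (hS : ShattersF (Set.image2 (fun D D' : Set Ω => (D ∪ D').indicator (fun _ => (1 : ℝ)))
      𝓓 𝓓) S) :
    2 ^ #S ≤ #(traceF ((fun D : Set Ω => D.indicator (fun _ => (1 : ℝ))) '' 𝓓) S) ^ 2 := by
  classical
  set 𝒯 := traceF ((fun D : Set Ω => D.indicator (fun _ => (1 : ℝ))) '' 𝓓) S
  have trace_mem : ∀ D ∈ 𝓓, S.filter (· ∈ D) ∈ 𝒯 := fun D hD =>
    mem_traceF.2 ⟨filter_subset _ _, _, ⟨D, hD, rfl⟩, fun x hx => by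
      rw [indicator_one_eq_one_iff, mem_filter, and_iff_right hx]⟩
  have hcover : S.powerset ⊆ image₂ (· ∪ ·) 𝒯 𝒯 := by
    intro T hT
    rw [Finset.mem_powerset] at hT
    obtain ⟨_, ⟨D, hD, D', hD', rfl⟩, hDD'⟩ := hS T hT
    simp only [indicator_one_eq_one_iff, Set.mem_union] at hDD'
    refine mem_image₂.2 ⟨_, trace_mem D hD, _, trace_mem D' hD', ?_⟩
    ext x
    rw [Finset.mem_union, mem_filter, mem_filter, ← and_or_left]
    exact ⟨fun ⟨hx, h⟩ => (hDD' x hx).1 h, fun h => ⟨hT h, (hDD' x (hT h)).2 h⟩⟩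
  calc 2 ^ #S = #S.powerset := (card_powerset S).symm
    _ ≤ #(image₂ (· ∪ ·) 𝒯 𝒯) := card_le_card hcover
    _ ≤ #𝒯 * #𝒯 := card_image₂_le _ _ _
    _ = #𝒯 ^ 2 := (sq _).symm

end Unions

lemma sum_choose_mul_le_add_pow {d n : ℕ} (hdn : d ≤ n) :
    (∑ i ∈ range (d + 1), n.choose i) * (d ^ d * n ^ (n - d)) ≤ (d + n) ^ n := by
  rw [add_pow, sum_mul]
  calc ∑ i ∈ range (d + 1), n.choose i * (d ^ d * n ^ (n - d))
      ≤ ∑ i ∈ range (d + 1), d ^ i * n ^ (n - i) * n.choose i := by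
        refine sum_le_sum fun i hi => ?_
        have hid : i ≤ d := Nat.lt_succ_iff.1 (mem_range.1 hi)
        calc n.choose i * (d ^ d * n ^ (n - d))
            = n.choose i * (d ^ i * (d ^ (d - i) * n ^ (n - d))) := by
              rw [← mul_assoc (d ^ i), ← pow_add, Nat.add_sub_cancel' hid]
          _ ≤ n.choose i * (d ^ i * (n ^ (d - i) * n ^ (n - d))) := by
              gcongr
          _ = d ^ i * n ^ (n - i) * n.choose i := by
              rw [← pow_add, show d - i + (n - d) = n - i by omega]; ring
    _ ≤ ∑ i ∈ range (n + 1), d ^ i * n ^ (n - i) * n.choose i :=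
        sum_le_sum_of_subset (range_subset_range.2 (by omega))

lemma sq_sum_choose_ten_mul_lt {d : ℕ} (hd : 1 ≤ d) :
    (∑ i ∈ range (d + 1), (10 * d).choose i) ^ 2 < 2 ^ (10 * d) := by
  set Φ := ∑ i ∈ range (d + 1), (10 * d).choose i
  have hΦ : Φ * 10 ^ (9 * d) ≤ 11 ^ (10 * d) := by
    have h := sum_choose_mul_le_add_pow (show d ≤ 10 * d by omega)
    rw [show 10 * d - d = 9 * d by omega, show d + 10 * d = 11 * d by ring, mul_pow, mul_pow,
      show d ^ d * (10 ^ (9 * d) * d ^ (9 * d)) = 10 ^ (9 * d) * d ^ (10 * d) by ring,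
      ← mul_assoc] at h
    exact Nat.le_of_mul_le_mul_right h (by positivity)
  have hpow : (11 ^ 20) ^ d < (1024 * 10 ^ 18) ^ d :=
    Nat.pow_lt_pow_left (by norm_num) (by omega)
  have key : Φ ^ 2 * 10 ^ (18 * d) < 2 ^ (10 * d) * 10 ^ (18 * d) := by
    calc Φ ^ 2 * 10 ^ (18 * d) = (Φ * 10 ^ (9 * d)) ^ 2 := by ring
      _ ≤ (11 ^ (10 * d)) ^ 2 := Nat.pow_le_pow_left hΦ 2
      _ = (11 ^ 20) ^ d := by rw [← pow_mul, ← pow_mul]; ring_nf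
      _ < (1024 * 10 ^ 18) ^ d := hpow
      _ = 2 ^ (10 * d) * 10 ^ (18 * d) := by rw [mul_pow, pow_mul, pow_mul]; norm_num
  exact Nat.lt_of_mul_lt_mul_right key

/-- Lemma `VC-union`: if the class of indicators of a family `𝓓` of sets has
VC dimension `d ≥ 1`, then the class of indicators of unions of two members of `𝓓` has VC
dimension `< 10 d`. -/
theorem stmt7 {Ω : Type*} (𝓓 : Set (Set Ω)) (d : ℕ) (hd : 1 ≤ d)
    (h : vcDim ((fun D : Set Ω => D.indicator (fun _ => (1 : ℝ))) '' 𝓓) = (d : ℕ∞)) :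
    vcDim (Set.image2 (fun D D' : Set Ω => (D ∪ D').indicator (fun _ => (1 : ℝ))) 𝓓 𝓓) <
      ((10 * d : ℕ) : ℕ∞) := by
  have hF : ∀ t, ShattersF ((fun D : Set Ω => D.indicator (fun _ => (1 : ℝ))) '' 𝓓) t →
      #t ≤ d := fun t ht => by exact_mod_cast h ▸ card_le_vcDim ht
  have hG : ∀ S, ShattersF (Set.image2 (fun D D' : Set Ω => (D ∪ D').indicator
      (fun _ => (1 : ℝ))) 𝓓 𝓓) S → #S ≤ 10 * d - 1 := by
    intro S hS
    by_contra! hlarge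
    obtain ⟨T, hTS, hT⟩ := exists_subset_card_eq (show 10 * d ≤ #S by omega)
    have h2T := two_pow_card_le_sq_card_traceF (hS.mono hTS)
    have hΦ := Nat.pow_le_pow_left (card_traceF_le hF T) 2
    rw [hT] at h2T hΦ
    exact absurd (h2T.trans hΦ) (sq_sum_choose_ten_mul_lt hd).not_ge
  exact (vcDim_le hG).trans_lt (by exact_mod_cast Nat.sub_lt (by omega) one_pos)
end
end
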